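/- Let O ⊆ ℝ^d (d ≥ 1) be a bounded open set and p a real number with p ≥ 2. For w smooth with compact support in O define 𝒢(w) := Δw − |w|^{p-2}w + (‖∇w‖_{L^2(O)}^2 + ‖w‖_{L^p(O)}^p) w. Then for every R > 0 there exists a constant C > 0, depending only on p, the Lebesgue measure of O, and R, such that for all smooth compactly supported u, v : O → ℝ with ‖u‖_{L^p(O)} ≤ R, ‖∇u‖_{L^2(O)} ≤ R, ‖v‖_{L^p(O)} ≤ R, ‖∇v‖_{L^2(O)} ≤ R, one has ∫_O (𝒢(u)(x) − 𝒢(v)(x))(u(x) − v(x)) dx ≤ C ‖u − v‖_{L^2(O)}^2. -/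

import Mathlib

open MeasureTheory

/-- The Laplacian `Δu(x) = ∑ i, ∂²u/∂x_i²(x)` as the sum of second partial derivatives. -/
noncomputable def lap {d : ℕ} (u : EuclideanSpace ℝ (Fin d) → ℝ)
    (x : EuclideanSpace ℝ (Fin d)) : ℝ :=
  ∑ i : Fin d, fderiv ℝ (fun y => fderiv ℝ u y (EuclideanSpace.single i (1 : ℝ))) x
    (EuclideanSpace.single i (1 : ℝ))

/-- The operator `𝒢(w) = Δw − |w|^{p-2}w + (‖∇w‖_{L²(O)}² + ‖w‖_{L^p(O)}^p) w`. -/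
noncomputable def Gop {d : ℕ} (O : Set (EuclideanSpace ℝ (Fin d))) (p : ℝ)
    (w : EuclideanSpace ℝ (Fin d) → ℝ) (x : EuclideanSpace ℝ (Fin d)) : ℝ :=
  lap w x - |w x| ^ (p - 2) * w x +
    ((∫ y in O, ‖gradient w y‖ ^ 2) + ∫ y in O, |w y| ^ p) * w x


open Real

lemma rpow_diff_le {r a b : ℝ} (hr : 1 ≤ r) (hb : 0 ≤ b) (hba : b ≤ a) :
    a ^ r - b ^ r ≤ r * a ^ (r - 1) * (a - b) := by
  rcases eq_or_lt_of_le hba with rfl | hlt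
  · simp
  have ha : 0 ≤ a := hb.trans hba
  obtain ⟨c, hc, hderiv⟩ := exists_hasDerivAt_eq_slope (fun x => x ^ r)
      (fun x => r * x ^ (r - 1)) hlt
      (by
        apply ContinuousOn.rpow_const continuousOn_id
        intro x _
        exact Or.inr (by linarith))
      (fun x hx => Real.hasDerivAt_rpow_const (Or.inr hr))
  have hc0 : 0 ≤ c := le_trans hb hc.1.le
  have hca : c ≤ a := hc.2.le
  have hmono : c ^ (r - 1) ≤ a ^ (r - 1) := Real.rpow_le_rpow hc0 hca (by linarith)
  have hab : 0 < a - b := by linarith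
  have hr0 : (0:ℝ) ≤ r := by linarith
  have key : a ^ r - b ^ r = r * c ^ (r - 1) * (a - b) := by
    have := hderiv
    field_simp at this
    linarith
  rw [key]
  have := mul_le_mul_of_nonneg_right (mul_le_mul_of_nonneg_left hmono hr0) hab.le
  linarith

lemma rpow_add_le_two_rpow {x y p : ℝ} (hx : 0 ≤ x) (hy : 0 ≤ y) (hp : 0 ≤ p) :
    (x + y) ^ p ≤ 2 ^ p * (x ^ p + y ^ p) := by
  have hmax : x + y ≤ 2 * max x y := by
    rcases le_total x y with h | h
    · simp [max_eq_right h]; linarith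
    · simp [max_eq_left h]; linarith
  have h0 : (0:ℝ) ≤ max x y := le_max_of_le_left hx
  have h1 : (x + y) ^ p ≤ (2 * max x y) ^ p :=
    Real.rpow_le_rpow (by linarith) hmax hp
  have h2 : (2 * max x y) ^ p = 2 ^ p * (max x y) ^ p :=
    Real.mul_rpow (by norm_num) h0
  have h3 : (max x y) ^ p ≤ x ^ p + y ^ p := by
    rcases le_total x y with h | h
    · rw [max_eq_right h]; nlinarith [Real.rpow_nonneg hx p]
    · rw [max_eq_left h]; nlinarith [Real.rpow_nonneg hy p]
  have hpos : (0:ℝ) < 2 ^ p := Real.rpow_pos_of_pos (by norm_num) p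
  calc (x+y)^p ≤ 2^p * (max x y)^p := by rw [← h2]; exact h1
    _ ≤ 2^p * (x^p + y^p) := by nlinarith

section aux
variable {q : ℝ}

/-- lower bound, case `0 ≤ b ≤ a`. -/
private lemma sp_lower_aux1 (hq : 0 ≤ q) {a b : ℝ} (hb : 0 ≤ b) (hba : b ≤ a) :
    (a + b) ^ q * (a - b) ^ 2 ≤ 2 ^ (1 + q) * ((a ^ q * a - b ^ q * b) * (a - b)) := by
  have ha : 0 ≤ a := hb.trans hba
  have h2q : (2:ℝ) ^ (1 + q) = 2 * 2 ^ q := by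
    rw [Real.rpow_add' (by norm_num) (by positivity), Real.rpow_one]
  have hsum : (a + b) ^ q ≤ 2 ^ q * a ^ q := by
    rw [← Real.mul_rpow (by norm_num) ha]
    exact Real.rpow_le_rpow (by linarith) (by linarith) hq
  have haq : 0 ≤ a ^ q := Real.rpow_nonneg ha q
  have hqmono : b ^ q ≤ a ^ q := Real.rpow_le_rpow hb hba hq
  have hab : 0 ≤ a - b := by linarith
  have hpos2 : (0:ℝ) ≤ 2 ^ q := by positivity
  have key : a ^ q * (a - b) ≤ a ^ q * a - b ^ q * b := by nlinarith
  have hX : 0 ≤ (a ^ q * a - b ^ q * b) * (a - b) :=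
    le_trans (by positivity) (mul_le_mul_of_nonneg_right key hab)
  have c1 : (a + b) ^ q * (a-b)^2 ≤ 2 ^ q * a ^ q * (a-b)^2 :=
    mul_le_mul_of_nonneg_right hsum (sq_nonneg _)
  have c2 : a ^ q * (a-b)^2 ≤ (a ^ q * a - b ^ q * b) * (a - b) := by
    have := mul_le_mul_of_nonneg_right key hab
    nlinarith
  rw [h2q]
  nlinarith [mul_le_mul_of_nonneg_left c2 hpos2]

/-- lower bound, case `b = -c`, `0 ≤ c ≤ a`. -/
private lemma sp_lower_aux2 (hq : 0 ≤ q) {a c : ℝ} (hc : 0 ≤ c) (hca : c ≤ a) :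
    (a + c) ^ q * (a + c) ^ 2 ≤ 2 ^ (1 + q) * ((a ^ q * a + c ^ q * c) * (a + c)) := by
  have ha : 0 ≤ a := hc.trans hca
  have h2q : (2:ℝ) ^ (1 + q) = 2 * 2 ^ q := by
    rw [Real.rpow_add' (by norm_num) (by positivity), Real.rpow_one]
  have hsum : (a + c) ^ q ≤ 2 ^ q * a ^ q := by
    rw [← Real.mul_rpow (by norm_num) ha]
    exact Real.rpow_le_rpow (by linarith) (by linarith) hq
  have haq : 0 ≤ a ^ q := Real.rpow_nonneg ha q
  have hcq : 0 ≤ c ^ q := Real.rpow_nonneg hc q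
  have hpos2 : (0:ℝ) ≤ 2 ^ q := by positivity
  have c1 : (a + c) ^ q * (a+c)^2 ≤ 2 ^ q * a ^ q * (a+c)^2 :=
    mul_le_mul_of_nonneg_right hsum (sq_nonneg _)
  have c2 : (a+c)^2 ≤ (2*a) * (a+c) := by nlinarith
  rw [h2q]
  nlinarith [mul_le_mul_of_nonneg_left c2 (mul_nonneg hpos2 haq),
    mul_nonneg (mul_nonneg hpos2 (mul_nonneg hcq hc)) (by linarith : (0:ℝ) ≤ a + c)]

lemma sp_lower (hq : 0 ≤ q) (a b : ℝ) :
    (|a| + |b|) ^ q * (a - b) ^ 2 ≤ 2 ^ (1 + q) * ((|a| ^ q * a - |b| ^ q * b) * (a - b)) := by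
  have main : ∀ a b : ℝ, |b| ≤ |a| → 0 ≤ a →
      (|a| + |b|) ^ q * (a - b) ^ 2 ≤ 2 ^ (1 + q) * ((|a| ^ q * a - |b| ^ q * b) * (a - b)) := by
    intro a b h ha
    rw [abs_of_nonneg ha] at h ⊢
    rcases le_or_gt 0 b with hb | hb
    · rw [abs_of_nonneg hb]
      exact sp_lower_aux1 hq hb (le_trans (le_abs_self b) (by rwa [abs_of_nonneg hb] at h ⊢))
    · rw [abs_of_neg hb]
      have hc : (0:ℝ) ≤ -b := by linarith
      have hca : -b ≤ a := by rwa [abs_of_neg hb] at h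
      have := sp_lower_aux2 hq hc hca
      have e1 : (a - b)^2 = (a + -b)^2 := by ring
      have e2 : (a ^ q * a - (-b) ^ q * b) * (a - b) = (a ^ q * a + (-b) ^ q * -b) * (a + -b) := by
        ring
      rw [e1, e2]
      exact this
  have full : ∀ a b : ℝ, |b| ≤ |a| →
      (|a| + |b|) ^ q * (a - b) ^ 2 ≤ 2 ^ (1 + q) * ((|a| ^ q * a - |b| ^ q * b) * (a - b)) := by
    intro a b h
    rcases le_or_gt 0 a with ha | ha
    · exact main a b h ha
    · have := main (-a) (-b) (by rwa [abs_neg, abs_neg]) (by linarith)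
      rw [abs_neg, abs_neg] at this
      have e1 : (-a - -b)^2 = (a - b)^2 := by ring
      have e2 : (|a| ^ q * -a - |b| ^ q * -b) * (-a - -b) =
          (|a| ^ q * a - |b| ^ q * b) * (a - b) := by ring
      rw [e1, e2] at this
      exact this
  rcases le_total |b| |a| with h | h
  · exact full a b h
  · have := full b a h
    have e1 : |b| + |a| = |a| + |b| := by ring
    have e2 : (b - a)^2 = (a - b)^2 := by ring
    have e3 : (|b| ^ q * b - |a| ^ q * a) * (b - a) = (|a| ^ q * a - |b| ^ q * b) * (a - b) := by
      ring
    rw [e1, e2, e3] at this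
    exact this

lemma sp_nonneg (hq : 0 ≤ q) (a b : ℝ) :
    0 ≤ (|a| ^ q * a - |b| ^ q * b) * (a - b) := by
  have h := sp_lower hq a b
  have h1 : (0:ℝ) ≤ (|a| + |b|) ^ q * (a - b) ^ 2 := by positivity
  have h2 : (0:ℝ) < 2 ^ (1+q) := Real.rpow_pos_of_pos (by norm_num) _
  nlinarith

lemma sp_mono (hq : 0 ≤ q) {a b : ℝ} (h : b ≤ a) : |b| ^ q * b ≤ |a| ^ q * a := by
  rcases eq_or_lt_of_le h with rfl | hlt
  · exact le_refl _
  · have := sp_nonneg hq a b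
    nlinarith

/-- upper bound, case `0 ≤ b ≤ a`. -/
private lemma sp_upper_aux1 (hq : 0 ≤ q) {a b : ℝ} (hb : 0 ≤ b) (hba : b ≤ a) :
    a ^ q * a - b ^ q * b ≤ (q + 3) * ((a + b) ^ q * (a - b)) := by
  have ha : 0 ≤ a := hb.trans hba
  have haq : 0 ≤ a ^ q := Real.rpow_nonneg ha q
  have hsq : a ^ q ≤ (a + b) ^ q := Real.rpow_le_rpow ha (by linarith) hq
  have e1 : a ^ q * a = a ^ (q + 1) := by
    rw [Real.rpow_add' ha (by positivity), Real.rpow_one]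
  have e2 : b ^ q * b = b ^ (q + 1) := by
    rw [Real.rpow_add' hb (by positivity), Real.rpow_one]
  have key : a ^ (q+1) - b ^ (q+1) ≤ (q+1) * a ^ ((q+1)-1) * (a - b) :=
    rpow_diff_le (by linarith) hb hba
  have e3 : (q+1) - 1 = q := by ring
  rw [e3] at key
  rw [e1, e2]
  have h4 : (q+1) * a ^ q * (a-b) ≤ (q+3) * ((a+b)^q * (a-b)) := by
    have h5 : a ^ q * (a - b) ≤ (a+b)^q * (a-b) :=
      mul_le_mul_of_nonneg_right hsq (by linarith)
    nlinarith [mul_nonneg haq (by linarith : (0:ℝ) ≤ a - b),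
      mul_nonneg (Real.rpow_nonneg (by linarith : (0:ℝ) ≤ a+b) q) (by linarith : (0:ℝ) ≤ a - b)]
  linarith

/-- upper bound, case `b = -c`, `0 ≤ c ≤ a`. -/
private lemma sp_upper_aux2 (hq : 0 ≤ q) {a c : ℝ} (hc : 0 ≤ c) (hca : c ≤ a) :
    a ^ q * a + c ^ q * c ≤ (q + 3) * ((a + c) ^ q * (a + c)) := by
  have ha : 0 ≤ a := hc.trans hca
  have haq : 0 ≤ a ^ q := Real.rpow_nonneg ha q
  have hcq : 0 ≤ c ^ q := Real.rpow_nonneg hc q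
  have hmono : c ^ q ≤ a ^ q := Real.rpow_le_rpow hc hca hq
  have hsq : a ^ q ≤ (a + c) ^ q := Real.rpow_le_rpow ha (by linarith) hq
  have h1 : c ^ q * c ≤ a ^ q * a := by nlinarith
  have h2 : a ^ q * a ≤ (a + c) ^ q * (a + c) := by
    have := mul_le_mul_of_nonneg_right hsq ha
    nlinarith [Real.rpow_nonneg (by linarith : (0:ℝ) ≤ a + c) q]
  nlinarith [mul_nonneg (Real.rpow_nonneg (by linarith : (0:ℝ) ≤ a + c) q)
    (by linarith : (0:ℝ) ≤ a + c)]

lemma sp_upper (hq : 0 ≤ q) (a b : ℝ) :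
    |(|a| ^ q * a - |b| ^ q * b)| ≤ (q + 3) * ((|a| + |b|) ^ q * |a - b|) := by
  have main : ∀ a b : ℝ, |b| ≤ |a| → 0 ≤ a →
      |(|a| ^ q * a - |b| ^ q * b)| ≤ (q + 3) * ((|a| + |b|) ^ q * |a - b|) := by
    intro a b h ha
    have hba : b ≤ a := le_trans (le_abs_self b) (by rwa [abs_of_nonneg ha] at h)
    have habs : |(|a| ^ q * a - |b| ^ q * b)| = |a| ^ q * a - |b| ^ q * b :=
      abs_of_nonneg (by linarith [sp_mono hq hba])
    rw [habs, abs_of_nonneg ha, abs_of_nonneg (by linarith : (0:ℝ) ≤ a - b)]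
    rw [abs_of_nonneg ha] at h
    rcases le_or_gt 0 b with hb | hb
    · rw [abs_of_nonneg hb]
      exact sp_upper_aux1 hq hb hba
    · rw [abs_of_neg hb]
      have := sp_upper_aux2 (a := a) (c := -b) hq (by linarith : (0:ℝ) ≤ -b) (by rwa [abs_of_neg hb] at h)
      have e2 : a ^ q * a - (-b) ^ q * b = a ^ q * a + (-b) ^ q * -b := by ring
      have e3 : a - b = a + -b := by ring
      rw [e2, e3]
      exact this
  have full : ∀ a b : ℝ, |b| ≤ |a| →
      |(|a| ^ q * a - |b| ^ q * b)| ≤ (q + 3) * ((|a| + |b|) ^ q * |a - b|) := by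
    intro a b h
    rcases le_or_gt 0 a with ha | ha
    · exact main a b h ha
    · have := main (-a) (-b) (by rwa [abs_neg, abs_neg]) (by linarith)
      rw [abs_neg, abs_neg] at this
      have e1 : |a| ^ q * -a - |b| ^ q * -b = -(|a| ^ q * a - |b| ^ q * b) := by ring
      have e2 : (-a : ℝ) - -b = -(a - b) := by ring
      rw [e1, e2, abs_neg, abs_neg] at this
      exact this
  rcases le_total |b| |a| with h | h
  · exact full a b h
  · have := full b a h
    have e1 : |b| ^ q * b - |a| ^ q * a = -(|a| ^ q * a - |b| ^ q * b) := by ring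
    have e2 : (b : ℝ) - a = -(a - b) := by ring
    have e3 : |b| + |a| = |a| + |b| := by ring
    rw [e1, e2, e3, abs_neg, abs_neg] at this
    exact this

end aux

lemma sp_sq {q : ℝ} (hq : 0 ≤ q) (a b : ℝ) :
    (|a| ^ q * a - |b| ^ q * b)^2 ≤ (q + 3) * ((|a| + |b|) ^ q * ((|a| ^ q * a - |b| ^ q * b) * (a - b))) := by
  have h1 := sp_upper hq a b
  have h2 := sp_nonneg hq a b
  have h3 : |(|a| ^ q * a - |b| ^ q * b)| * |a - b| = (|a| ^ q * a - |b| ^ q * b) * (a - b) := by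
    rw [← abs_mul, abs_of_nonneg h2]
  have h4 : (|a| ^ q * a - |b| ^ q * b)^2 = |(|a| ^ q * a - |b| ^ q * b)| * |(|a| ^ q * a - |b| ^ q * b)| := by
    rw [← abs_mul, abs_mul_self, sq]
  rw [h4]
  calc |(|a| ^ q * a - |b| ^ q * b)| * |(|a| ^ q * a - |b| ^ q * b)|
      ≤ ((q+3) * ((|a| + |b|) ^ q * |a - b|)) * |(|a| ^ q * a - |b| ^ q * b)| :=
        mul_le_mul_of_nonneg_right h1 (abs_nonneg _)
    _ = (q+3) * ((|a| + |b|) ^ q * (|(|a| ^ q * a - |b| ^ q * b)| * |a - b|)) := by ring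
    _ = (q + 3) * ((|a| + |b|) ^ q * ((|a| ^ q * a - |b| ^ q * b) * (a - b))) := by rw [h3]

lemma sp_abs_le {q : ℝ} (hq : 0 ≤ q) (a b : ℝ) :
    |(|a| ^ q * a)| ≤ (|a| + |b|) ^ q * (|a| + |b|) := by
  rw [abs_mul, abs_of_nonneg (Real.rpow_nonneg (abs_nonneg a) q)]
  apply mul_le_mul (Real.rpow_le_rpow (abs_nonneg a) (by linarith [abs_nonneg b]) hq)
    (by linarith [abs_nonneg b]) (abs_nonneg a)
    (Real.rpow_nonneg (by positivity) q)


section meas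
variable {d : ℕ}
local notation "E" => EuclideanSpace ℝ (Fin d)

lemma memL2 {f : E → ℝ} (hf : Continuous f) (h : HasCompactSupport f) :
    MemLp f (ENNReal.ofReal 2) (volume : Measure E) := by
  have h2 : ENNReal.ofReal 2 = 2 := by norm_num
  rw [h2]
  exact hf.memLp_of_hasCompactSupport h

lemma intCS0 {f g : E → ℝ} (hf : Continuous f) (hg : Continuous g)
    (hfs : HasCompactSupport f) (hgs : HasCompactSupport g) :
    ∫ x, f x * g x ≤ Real.sqrt (∫ x, (f x)^2) * Real.sqrt (∫ x, (g x)^2) := by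
  have h22 : Real.HolderConjugate 2 2 := Real.HolderConjugate.two_two
  have habs : ∀ y : ℝ, |y| ^ (2:ℝ) = y ^ 2 := fun y => by
    rw [show (2:ℝ) = ((2:ℕ):ℝ) by norm_num, Real.rpow_natCast, sq_abs]
  have hfa : Continuous fun x => |f x| := hf.abs
  have hga : Continuous fun x => |g x| := hg.abs
  have hfsa : HasCompactSupport fun x => |f x| := hfs.comp_left (g := fun t : ℝ => |t|) abs_zero
  have hgsa : HasCompactSupport fun x => |g x| := hgs.comp_left (g := fun t : ℝ => |t|) abs_zero
  have key := integral_mul_le_Lp_mul_Lq_of_nonneg (μ := (volume : Measure E)) h22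
    (f := fun x => |f x|) (g := fun x => |g x|)
    (Filter.Eventually.of_forall fun x => abs_nonneg _)
    (Filter.Eventually.of_forall fun x => abs_nonneg _)
    (memL2 hfa hfsa) (memL2 hga hgsa)
  simp only [habs] at key
  have h1 : ∫ x, f x * g x ≤ ∫ x, |f x| * |g x| := by
    apply integral_mono ((hf.mul hg).integrable_of_hasCompactSupport hfs.mul_right)
      ((hfa.mul hga).integrable_of_hasCompactSupport hfsa.mul_right)
    intro x
    simpa [abs_mul] using le_abs_self (f x * g x)
  rw [Real.sqrt_eq_rpow, Real.sqrt_eq_rpow]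
  exact h1.trans key

lemma intCS_abs {f g : E → ℝ} (hf : Continuous f) (hg : Continuous g)
    (hfs : HasCompactSupport f) (hgs : HasCompactSupport g) :
    |∫ x, f x * g x| ≤ Real.sqrt (∫ x, (f x)^2) * Real.sqrt (∫ x, (g x)^2) := by
  have h1 := intCS0 hf hg hfs hgs
  have hfsn : HasCompactSupport (fun x => -f x) := hfs.comp_left (g := fun t : ℝ => -t) neg_zero
  have h2 := intCS0 (f := fun x => -f x) hf.neg hg hfsn hgs
  have e1 : ∫ x, (-f x) * g x = - ∫ x, f x * g x := by
    rw [← integral_neg]; congr 1; funext x; ring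
  have e2 : (fun x => (-f x)^2) = fun x => (f x)^2 := by funext x; ring
  rw [e1, e2] at h2
  exact abs_le.2 ⟨by linarith, h1⟩

lemma hcs_sum {ι : Type*} (s : Finset ι) (g : ι → E → ℝ)
    (h : ∀ i, HasCompactSupport (g i)) : HasCompactSupport (fun x => ∑ i ∈ s, g i x) := by
  classical
  induction s using Finset.induction with
  | empty => simp only [Finset.sum_empty]; exact HasCompactSupport.zero
  | insert _ _ hnotmem ih =>
    simp only [Finset.sum_insert hnotmem]
    exact (h _).add ih

lemma pd_contDiff {f : E → ℝ} (hf : ContDiff ℝ (⊤ : ℕ∞) f) (y : E) :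
    ContDiff ℝ (⊤ : ℕ∞) (fun x => fderiv ℝ f x y) := by
  have h1 : ContDiff ℝ (⊤ : ℕ∞) (fderiv ℝ f) := hf.fderiv_right (by simp)
  exact (ContinuousLinearMap.apply ℝ ℝ y).contDiff.comp h1

lemma pd_cs {f : E → ℝ} (h : HasCompactSupport f) (y : E) :
    HasCompactSupport (fun x => fderiv ℝ f x y) :=
  h.fderiv_apply ℝ y
end meas

section grad
variable {d : ℕ}
local notation "E" => EuclideanSpace ℝ (Fin d)


lemma grad_inner {f : E → ℝ} (x y : E) :
    (inner ℝ (gradient f x) y : ℝ) = fderiv ℝ f x y :=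
  InnerProductSpace.toDual_symm_apply

lemma grad_coord {f : E → ℝ} (x : E) (i : Fin d) :
    gradient f x i = fderiv ℝ f x (EuclideanSpace.single i (1:ℝ)) := by
  have h1 : (inner ℝ (gradient f x) (EuclideanSpace.single i ((1:ℝ))) : ℝ)
      = 1 * (gradient f x i) := by
    rw [EuclideanSpace.inner_single_right]
    simp
  rw [← grad_inner x (EuclideanSpace.single i (1:ℝ))]
  rw [h1]; ring

lemma norm_grad_sq {f : E → ℝ} (x : E) :
    ‖gradient f x‖^2 = ∑ i : Fin d, (fderiv ℝ f x (EuclideanSpace.single i (1:ℝ)))^2 := by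
  rw [EuclideanSpace.norm_eq]
  rw [Real.sq_sqrt (by positivity)]
  congr 1
  funext i
  rw [Real.norm_eq_abs, sq_abs, grad_coord]

lemma grad_cont {f : E → ℝ} (hf : ContDiff ℝ (⊤ : ℕ∞) f) : Continuous (gradient f) := by
  have h1 : ContDiff ℝ (⊤ : ℕ∞) (fderiv ℝ f) := hf.fderiv_right (by simp)
  exact (LinearIsometryEquiv.continuous _).comp h1.continuous

lemma grad_cs {f : E → ℝ} (h : HasCompactSupport f) : HasCompactSupport (gradient f) :=
  (h.fderiv ℝ).comp_left (g := fun L : E →L[ℝ] ℝ => (InnerProductSpace.toDual ℝ E).symm L)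
    (map_zero _)

lemma grad_sub {u v : E → ℝ} (hu : Differentiable ℝ u) (hv : Differentiable ℝ v) (x : E) :
    gradient (u - v) x = gradient u x - gradient v x := by
  unfold gradient
  have e0 : (u - v) = fun y => u y - v y := rfl
  rw [e0, fderiv_fun_sub (hu x) (hv x), map_sub]

lemma lap_cont {f : E → ℝ} (hf : ContDiff ℝ (⊤ : ℕ∞) f) : Continuous (lap f) := by
  apply continuous_finset_sum
  intro i _
  exact (pd_contDiff (pd_contDiff hf _) _).continuous

lemma lap_cs {f : E → ℝ} (h : HasCompactSupport f) : HasCompactSupport (lap f) := by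
  apply hcs_sum
  intro i
  exact pd_cs (pd_cs h _) _

lemma lap_sub {u v : E → ℝ} (hu : ContDiff ℝ (⊤ : ℕ∞) u) (hv : ContDiff ℝ (⊤ : ℕ∞) v) (x : E) :
    lap (u - v) x = lap u x - lap v x := by
  unfold lap
  rw [← Finset.sum_sub_distrib]
  congr 1
  funext i
  set e := EuclideanSpace.single i (1:ℝ)
  have e0 : (u - v) = fun y => u y - v y := rfl
  have h1 : (fun y => fderiv ℝ (u - v) y e) = fun y => fderiv ℝ u y e - fderiv ℝ v y e := by
    funext y
    rw [e0, fderiv_fun_sub (hu.differentiable (by simp) y) (hv.differentiable (by simp) y)]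
    rfl
  rw [h1]
  rw [fderiv_fun_sub ((pd_contDiff hu e).differentiable (by simp) x)
    ((pd_contDiff hv e).differentiable (by simp) x)]
  rfl

lemma lap_ibp {f : E → ℝ} (hf : ContDiff ℝ (⊤ : ℕ∞) f) (hcs : HasCompactSupport f) :
    ∫ x, lap f x * f x = - ∫ x, ‖gradient f x‖^2 := by
  have hdf : Differentiable ℝ f := hf.differentiable (by simp)
  have hfc : Continuous f := hf.continuous
  set e : Fin d → E := fun i => EuclideanSpace.single i (1:ℝ) with he
  have hgcd : ∀ i, ContDiff ℝ (⊤ : ℕ∞) (fun x => fderiv ℝ f x (e i)) := fun i => pd_contDiff hf (e i)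
  have hgcs : ∀ i, HasCompactSupport (fun x => fderiv ℝ f x (e i)) := fun i => pd_cs hcs (e i)
  have hg2cd : ∀ i, Continuous (fun x => fderiv ℝ (fun y => fderiv ℝ f y (e i)) x (e i)) :=
    fun i => (pd_contDiff (hgcd i) (e i)).continuous
  have hg2cs : ∀ i, HasCompactSupport (fun x => fderiv ℝ (fun y => fderiv ℝ f y (e i)) x (e i)) :=
    fun i => pd_cs (hgcs i) (e i)
  have h1 : ∀ i : Fin d, ∫ x, (fderiv ℝ (fun y => fderiv ℝ f y (e i)) x (e i)) * f x
      = - ∫ x, (fderiv ℝ f x (e i))^2 := by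
    intro i
    have key := integral_mul_fderiv_eq_neg_fderiv_mul_of_integrable
      (μ := (volume : Measure E)) (f := f) (g := fun y => fderiv ℝ f y (e i)) (v := e i)
      (((hgcd i).continuous.mul (hgcd i).continuous).integrable_of_hasCompactSupport
        ((hgcs i).mul_right))
      ((hfc.mul (hg2cd i)).integrable_of_hasCompactSupport ((hg2cs i).mul_left))
      ((hfc.mul (hgcd i).continuous).integrable_of_hasCompactSupport ((hgcs i).mul_left))
      (fun x _ => hdf x) (fun x _ => (hgcd i).differentiable (by simp) x)
    have e1 : (fun x => (fderiv ℝ (fun y => fderiv ℝ f y (e i)) x (e i)) * f x)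
        = fun x => f x * fderiv ℝ (fun y => fderiv ℝ f y (e i)) x (e i) := by
      funext x; ring
    rw [e1, key]
    congr 1
    apply integral_congr_ae
    apply Filter.Eventually.of_forall
    intro x
    show (fderiv ℝ f x) (e i) * (fderiv ℝ f x) (e i) = (fderiv ℝ f x) (e i) ^ 2
    rw [sq]
  have h2 : (fun x => lap f x * f x)
      = fun x => ∑ i : Fin d, (fderiv ℝ (fun y => fderiv ℝ f y (e i)) x (e i)) * f x := by
    funext x
    unfold lap
    rw [Finset.sum_mul]
  rw [h2]
  rw [integral_finset_sum _ (fun i _ =>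
    (((hg2cd i).mul hfc).integrable_of_hasCompactSupport ((hg2cs i).mul_right) :
      Integrable (fun x => (fderiv ℝ (fun y => fderiv ℝ f y (e i)) x (e i)) * f x)))]
  have h3 : (fun x => ‖gradient f x‖^2) = fun x => ∑ i : Fin d, (fderiv ℝ f x (e i))^2 := by
    funext x
    exact norm_grad_sq x
  rw [h3]
  rw [integral_finset_sum _ (fun i _ =>
    (((hgcd i).continuous.mul (hgcd i).continuous).integrable_of_hasCompactSupport
      ((hgcs i).mul_right)).congr (Filter.Eventually.of_forall fun x => (sq ((fderiv ℝ f x) (e i))).symm))]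
  rw [← Finset.sum_neg_distrib]
  exact Finset.sum_congr rfl fun i _ => h1 i

lemma off_zero {O : Set E} {f : E → ℝ} (hsup : tsupport f ⊆ O) {x : E} (hx : x ∉ O) : f x = 0 :=
  image_eq_zero_of_notMem_tsupport (fun h => hx (hsup h))

lemma off_fderiv_zero {O : Set E} {f : E → ℝ} (hsup : tsupport f ⊆ O) {x : E} (hx : x ∉ O) :
    fderiv ℝ f x = 0 := by
  have hmem : (tsupport f)ᶜ ∈ nhds x :=
    ((isClosed_tsupport f).isOpen_compl).mem_nhds (fun h => hx (hsup h))
  have heq : f =ᶠ[nhds x] (fun _ => (0:ℝ)) :=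
    Filter.eventuallyEq_of_mem hmem (fun y hy => image_eq_zero_of_notMem_tsupport hy)
  rw [heq.fderiv_eq]
  exact fderiv_const_apply 0

lemma off_grad_zero {O : Set E} {f : E → ℝ} (hsup : tsupport f ⊆ O) {x : E} (hx : x ∉ O) :
    gradient f x = 0 := by
  unfold gradient
  rw [off_fderiv_zero hsup hx, map_zero]

end grad

section lpdiff
variable {d : ℕ}
local notation "E" => EuclideanSpace ℝ (Fin d)

lemma hcs_sub {f g : E → ℝ} (hf : HasCompactSupport f) (hg : HasCompactSupport g) :
    HasCompactSupport (fun x => f x - g x) := by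
  have e : (fun x => f x - g x) = f + fun x => -g x := by funext x; simp [sub_eq_add_neg]
  rw [e]
  exact hf.add (hg.comp_left (g := fun t : ℝ => -t) neg_zero)

lemma hcs_add {f g : E → ℝ} (hf : HasCompactSupport f) (hg : HasCompactSupport g) :
    HasCompactSupport (fun x => f x + g x) := hf.add hg

lemma abs_int_le {f : E → ℝ} : |∫ x, f x| ≤ ∫ x, |f x| := by
  simpa [Real.norm_eq_abs] using
    MeasureTheory.norm_integral_le_integral_norm (μ := (volume : Measure E)) f

lemma abs_rpow_eq_sp {q : ℝ} (hq : 0 ≤ q) (a : ℝ) : |a| ^ (q + 2) = (|a| ^ q * a) * a := by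
  rw [Real.rpow_add' (abs_nonneg a) (by positivity)]
  rw [show ((2:ℝ)) = ((2:ℕ):ℝ) by norm_num, Real.rpow_natCast, sq_abs]
  ring

set_option maxHeartbeats 1000000 in
lemma lp_diff_bound {p : ℝ} (hp : 2 ≤ p) {u v : E → ℝ}
    (hcu : Continuous u) (hcv : Continuous v)
    (hsu : HasCompactSupport u) (hsv : HasCompactSupport v)
    {SPb : ℝ}
    (hSP : ∫ x, (|u x| + |v x|) ^ p ≤ SPb) :
    |(∫ x, |u x| ^ p) - ∫ x, |v x| ^ p| ≤
      ((Real.sqrt ((p + 1) * SPb) + Real.sqrt (2 ^ (p - 1)) * Real.sqrt (4 * SPb)) / 2) *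
        Real.sqrt (∫ x, (|u x| ^ (p - 2) * u x - |v x| ^ (p - 2) * v x) * (u x - v x)) := by
  have hq : (0:ℝ) ≤ p - 2 := by linarith
  set q : ℝ := p - 2 with hqdef
  have hpq : p = q + 2 := by rw [hqdef]; ring
  have hq2 : (0:ℝ) < q + 2 := by linarith
  rw [hpq] at hSP ⊢
  have e1 : (q + 2) + 1 = q + 3 := by ring
  have e2 : (q + 2) - 1 = 1 + q := by ring
  rw [e1, e2]
  -- abbreviations
  set M : E → ℝ := fun x => |u x| + |v x| with hMdef
  set φu : E → ℝ := fun x => |u x| ^ q * u x with hφudef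
  set φv : E → ℝ := fun x => |v x| ^ q * v x with hφvdef
  have hMnn : ∀ x, 0 ≤ M x := fun x => by rw [hMdef]; positivity
  have hMqnn : ∀ x, 0 ≤ M x ^ q := fun x => Real.rpow_nonneg (hMnn x) q
  -- continuity and support facts
  have habsu : HasCompactSupport (fun x => |u x|) := hsu.comp_left (g := fun t : ℝ => |t|) abs_zero
  have habsv : HasCompactSupport (fun x => |v x|) := hsv.comp_left (g := fun t : ℝ => |t|) abs_zero
  have hMc : Continuous M := hcu.abs.add hcv.abs
  have hMcs : HasCompactSupport M := habsu.add habsv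
  have hMqc : Continuous (fun x => M x ^ q) :=
    (Real.continuous_rpow_const hq).comp hMc
  have hsqMqc : Continuous (fun x => Real.sqrt (M x ^ q)) := Real.continuous_sqrt.comp hMqc
  have hφuc : Continuous φu := ((Real.continuous_rpow_const hq).comp hcu.abs).mul hcu
  have hφvc : Continuous φv := ((Real.continuous_rpow_const hq).comp hcv.abs).mul hcv
  have hφucs : HasCompactSupport φu :=
    hsu.comp_left (g := fun t : ℝ => |t| ^ q * t) (by simp)
  have hφvcs : HasCompactSupport φv :=
    hsv.comp_left (g := fun t : ℝ => |t| ^ q * t) (by simp)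
  have hwc : Continuous (fun x => u x - v x) := hcu.sub hcv
  have hwcs : HasCompactSupport (fun x => u x - v x) := hcs_sub hsu hsv
  have hφdc : Continuous (fun x => φu x - φv x) := hφuc.sub hφvc
  have hφdcs : HasCompactSupport (fun x => φu x - φv x) := hcs_sub hφucs hφvcs
  have hGc : Continuous (fun x => (φu x - φv x) * (u x - v x)) := hφdc.mul hwc
  have hGcs : HasCompactSupport (fun x => (φu x - φv x) * (u x - v x)) := hφdcs.mul_right
  have hGint : Integrable (fun x => (φu x - φv x) * (u x - v x)) (volume : Measure E) :=
    hGc.integrable_of_hasCompactSupport hGcs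
  have hGnn : (0:ℝ) ≤ ∫ x, (φu x - φv x) * (u x - v x) :=
    integral_nonneg fun x => sp_nonneg hq (u x) (v x)
  set G : ℝ := ∫ x, (φu x - φv x) * (u x - v x) with hGdef
  -- M^(q+2) integrable and bounded by SPb
  have hMp_c : Continuous (fun x => M x ^ (q + 2)) :=
    (Real.continuous_rpow_const (by linarith)).comp hMc
  have hMp_cs : HasCompactSupport (fun x => M x ^ (q + 2)) :=
    hMcs.comp_left (g := fun t : ℝ => t ^ (q + 2)) (Real.zero_rpow (by linarith))
  have hMp_int : Integrable (fun x => M x ^ (q + 2)) (volume : Measure E) :=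
    hMp_c.integrable_of_hasCompactSupport hMp_cs
  have hSPb0 : (0:ℝ) ≤ SPb :=
    le_trans (integral_nonneg fun x => Real.rpow_nonneg (hMnn x) _) hSP
  -- |u|^p integrability
  have hupc : Continuous (fun x => |u x| ^ (q + 2)) :=
    (Real.continuous_rpow_const (by linarith)).comp hcu.abs
  have hvpc : Continuous (fun x => |v x| ^ (q + 2)) :=
    (Real.continuous_rpow_const (by linarith)).comp hcv.abs
  have hupcs : HasCompactSupport (fun x => |u x| ^ (q + 2)) :=
    hsu.comp_left (g := fun t : ℝ => |t| ^ (q + 2)) (by simp [Real.zero_rpow (ne_of_gt hq2)])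
  have hvpcs : HasCompactSupport (fun x => |v x| ^ (q + 2)) :=
    hsv.comp_left (g := fun t : ℝ => |t| ^ (q + 2)) (by simp [Real.zero_rpow (ne_of_gt hq2)])
  have hupint : Integrable (fun x => |u x| ^ (q + 2)) (volume : Measure E) :=
    hupc.integrable_of_hasCompactSupport hupcs
  have hvpint : Integrable (fun x => |v x| ^ (q + 2)) (volume : Measure E) :=
    hvpc.integrable_of_hasCompactSupport hvpcs
  -- T1 and T2
  have hT1c : Continuous (fun x => (φu x - φv x) * (u x + v x)) := hφdc.mul (hcu.add hcv)
  have hT1cs : HasCompactSupport (fun x => (φu x - φv x) * (u x + v x)) := hφdcs.mul_right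
  have hT1int : Integrable (fun x => (φu x - φv x) * (u x + v x)) (volume : Measure E) :=
    hT1c.integrable_of_hasCompactSupport hT1cs
  have hT2c : Continuous (fun x => (φu x + φv x) * (u x - v x)) := (hφuc.add hφvc).mul hwc
  have hT2cs : HasCompactSupport (fun x => (φu x + φv x) * (u x - v x)) :=
    (hcs_add hφucs hφvcs).mul_right
  have hT2int : Integrable (fun x => (φu x + φv x) * (u x - v x)) (volume : Measure E) :=
    hT2c.integrable_of_hasCompactSupport hT2cs
  set T1 : ℝ := ∫ x, (φu x - φv x) * (u x + v x) with hT1def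
  set T2 : ℝ := ∫ x, (φu x + φv x) * (u x - v x) with hT2def
  -- split
  have hsplit : (∫ x, |u x| ^ (q+2)) - ∫ x, |v x| ^ (q+2) = (1/2) * T1 + (1/2) * T2 := by
    rw [hT1def, hT2def, ← integral_const_mul, ← integral_const_mul,
      ← integral_sub hupint hvpint,
      ← integral_add (hT1int.const_mul _) (hT2int.const_mul _)]

    apply integral_congr_ae
    apply Filter.Eventually.of_forall
    intro x
    show |u x| ^ (q+2) - |v x| ^ (q+2)
      = 1/2 * ((φu x - φv x) * (u x + v x)) + 1/2 * ((φu x + φv x) * (u x - v x))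
    rw [abs_rpow_eq_sp hq (u x), abs_rpow_eq_sp hq (v x), hφudef, hφvdef]
    ring
  -- T1 bound
  set F1 : E → ℝ := fun x => Real.sqrt ((φu x - φv x) * (u x - v x)) with hF1def
  set G2 : E → ℝ := fun x =>
    (Real.sqrt (q + 3) * Real.sqrt (M x ^ q)) * |u x + v x| with hG2def
  have hF1c : Continuous F1 := Real.continuous_sqrt.comp hGc
  have hF1cs : HasCompactSupport F1 := hGcs.comp_left (g := Real.sqrt) Real.sqrt_zero
  have hG2c : Continuous G2 := ((continuous_const.mul hsqMqc).mul (hcu.add hcv).abs)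
  have hG2cs : HasCompactSupport G2 :=
    HasCompactSupport.mul_left ((hcs_add hsu hsv).comp_left (g := fun t : ℝ => |t|) abs_zero)
  have hF1sq : ∀ x, F1 x ^ 2 = (φu x - φv x) * (u x - v x) := fun x =>
    Real.sq_sqrt (sp_nonneg hq (u x) (v x))
  have hintF1sq : ∫ x, F1 x ^ 2 = G := by
    rw [hGdef]
    apply integral_congr_ae
    exact Filter.Eventually.of_forall fun x => hF1sq x
  have hG2sqle : ∀ x, G2 x ^ 2 ≤ (q+3) * M x ^ (q+2) := by
    intro x
    have h1 : G2 x ^ 2 = (Real.sqrt (q+3))^2 * ((Real.sqrt (M x ^ q))^2 * |u x + v x| ^ 2) := by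
      rw [hG2def]; ring
    rw [h1, Real.sq_sqrt (by linarith : (0:ℝ) ≤ q + 3), Real.sq_sqrt (hMqnn x), sq_abs]
    have h2 : (u x + v x)^2 ≤ M x ^ 2 := by
      have := abs_add_le (u x) (v x)
      have h3 : -(M x) ≤ u x + v x := by
        rw [hMdef]; simp only []
        have := neg_abs_le (u x); have := neg_abs_le (v x); linarith
      have h4 : u x + v x ≤ M x := by
        rw [hMdef]; simp only []
        have := le_abs_self (u x); have := le_abs_self (v x); linarith
      nlinarith
    have h5 : M x ^ q * (u x + v x)^2 ≤ M x ^ q * M x ^ 2 :=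
      mul_le_mul_of_nonneg_left h2 (hMqnn x)
    have h6 : M x ^ q * M x ^ 2 = M x ^ (q+2) := by
      rw [Real.rpow_add' (hMnn x) (ne_of_gt hq2)]
      rw [show ((2:ℝ)) = ((2:ℕ):ℝ) by norm_num, Real.rpow_natCast]
    nlinarith [hMqnn x, sq_nonneg (u x + v x)]
  have hintG2sq : ∫ x, G2 x ^ 2 ≤ (q+3) * SPb := by
    have step : ∫ x, G2 x ^ 2 ≤ ∫ x, (q+3) * M x ^ (q+2) := by
      apply integral_mono
        ((hG2c.mul hG2c).integrable_of_hasCompactSupport hG2cs.mul_right |>.congr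
          (Filter.Eventually.of_forall fun x => (sq (G2 x)).symm))
        (hMp_int.const_mul _)
        hG2sqle
    rw [integral_const_mul] at step
    calc ∫ x, G2 x ^ 2 ≤ (q+3) * ∫ x, M x ^ (q+2) := step
      _ ≤ (q+3) * SPb := by nlinarith [hSP]
  have hpt1 : ∀ x, |(φu x - φv x) * (u x + v x)| ≤ F1 x * G2 x := by
    intro x
    have hsq := sp_sq hq (u x) (v x)
    have habs : |φu x - φv x| = Real.sqrt ((φu x - φv x)^2) := (Real.sqrt_sq_eq_abs _).symm
    have hb : Real.sqrt ((φu x - φv x)^2)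
        ≤ Real.sqrt ((q+3) * (M x ^ q * ((φu x - φv x) * (u x - v x)))) := by
      apply Real.sqrt_le_sqrt
      exact hsq
    have hsplit2 : Real.sqrt ((q+3) * (M x ^ q * ((φu x - φv x) * (u x - v x))))
        = Real.sqrt (q+3) * (Real.sqrt (M x ^ q) * F1 x) := by
      rw [Real.sqrt_mul (by linarith : (0:ℝ) ≤ q+3), Real.sqrt_mul (hMqnn x), hF1def]
    rw [abs_mul]
    calc |φu x - φv x| * |u x + v x|
        ≤ (Real.sqrt (q+3) * (Real.sqrt (M x ^ q) * F1 x)) * |u x + v x| := by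
          apply mul_le_mul_of_nonneg_right _ (abs_nonneg _)
          rw [habs]; rw [← hsplit2]; exact hb
      _ = F1 x * G2 x := by rw [hG2def]; ring
  have hT1bound : |T1| ≤ Real.sqrt G * Real.sqrt ((q+3) * SPb) := by
    have c1 : |T1| ≤ ∫ x, |(φu x - φv x) * (u x + v x)| := abs_int_le
    have c2 : ∫ x, |(φu x - φv x) * (u x + v x)| ≤ ∫ x, F1 x * G2 x := by
      apply integral_mono hT1int.abs
        ((hF1c.mul hG2c).integrable_of_hasCompactSupport hF1cs.mul_right) hpt1
    have c3 := intCS0 hF1c hG2c hF1cs hG2cs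
    rw [hintF1sq] at c3
    have c4 : Real.sqrt (∫ x, G2 x ^ 2) ≤ Real.sqrt ((q+3) * SPb) :=
      Real.sqrt_le_sqrt hintG2sq
    calc |T1| ≤ ∫ x, F1 x * G2 x := c1.trans c2
      _ ≤ Real.sqrt G * Real.sqrt (∫ x, G2 x ^ 2) := c3
      _ ≤ Real.sqrt G * Real.sqrt ((q+3) * SPb) :=
          mul_le_mul_of_nonneg_left c4 (Real.sqrt_nonneg _)
  -- T2 bound
  set F2 : E → ℝ := fun x => Real.sqrt (M x ^ q) * |u x - v x| with hF2def
  set G3 : E → ℝ := fun x => (2 * Real.sqrt (M x ^ q)) * M x with hG3def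
  have hF2c : Continuous F2 := hsqMqc.mul hwc.abs
  have hF2cs : HasCompactSupport F2 :=
    HasCompactSupport.mul_left (hwcs.comp_left (g := fun t : ℝ => |t|) abs_zero)
  have hG3c : Continuous G3 := (continuous_const.mul hsqMqc).mul hMc
  have hG3cs : HasCompactSupport G3 := HasCompactSupport.mul_left hMcs
  have hF2sqle : ∀ x, F2 x ^ 2 ≤ 2 ^ (1+q) * ((φu x - φv x) * (u x - v x)) := by
    intro x
    have h1 : F2 x ^ 2 = M x ^ q * (u x - v x)^2 := by
      rw [hF2def]
      have : (Real.sqrt (M x ^ q) * |u x - v x|)^2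
          = (Real.sqrt (M x ^ q))^2 * |u x - v x|^2 := by ring
      rw [this, Real.sq_sqrt (hMqnn x), sq_abs]
    rw [h1]
    exact sp_lower hq (u x) (v x)
  have hG3sqle : ∀ x, G3 x ^ 2 ≤ 4 * M x ^ (q+2) := by
    intro x
    have h1 : G3 x ^ 2 = 4 * ((Real.sqrt (M x ^ q))^2 * M x ^ 2) := by rw [hG3def]; ring
    rw [h1, Real.sq_sqrt (hMqnn x)]
    have h6 : M x ^ q * M x ^ 2 = M x ^ (q+2) := by
      rw [Real.rpow_add' (hMnn x) (ne_of_gt hq2)]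
      rw [show ((2:ℝ)) = ((2:ℕ):ℝ) by norm_num, Real.rpow_natCast]
    rw [h6]
  have hintF2sq : ∫ x, F2 x ^ 2 ≤ 2 ^ (1+q) * G := by
    have step : ∫ x, F2 x ^ 2 ≤ ∫ x, 2 ^ (1+q) * ((φu x - φv x) * (u x - v x)) := by
      apply integral_mono
        ((hF2c.mul hF2c).integrable_of_hasCompactSupport hF2cs.mul_right |>.congr
          (Filter.Eventually.of_forall fun x => (sq (F2 x)).symm))
        (hGint.const_mul _) hF2sqle
    rw [integral_const_mul] at step
    rw [hGdef]
    exact step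
  have hintG3sq : ∫ x, G3 x ^ 2 ≤ 4 * SPb := by
    have step : ∫ x, G3 x ^ 2 ≤ ∫ x, 4 * M x ^ (q+2) := by
      apply integral_mono
        ((hG3c.mul hG3c).integrable_of_hasCompactSupport hG3cs.mul_right |>.congr
          (Filter.Eventually.of_forall fun x => (sq (G3 x)).symm))
        (hMp_int.const_mul _) hG3sqle
    rw [integral_const_mul] at step
    nlinarith [hSP]
  have hpt2 : ∀ x, |(φu x + φv x) * (u x - v x)| ≤ F2 x * G3 x := by
    intro x
    have h1 : |φu x + φv x| ≤ 2 * (M x ^ q * M x) := by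
      have hu1 : |φu x| ≤ M x ^ q * M x := by
        have := sp_abs_le hq (u x) (v x)
        rw [hφudef, hMdef]
        exact this
      have hv1 : |φv x| ≤ M x ^ q * M x := by
        have := sp_abs_le hq (v x) (u x)
        rw [add_comm |v x| |u x|] at this
        rw [hφvdef, hMdef]
        exact this
      calc |φu x + φv x| ≤ |φu x| + |φv x| := abs_add_le _ _
        _ ≤ 2 * (M x ^ q * M x) := by linarith
    rw [abs_mul]
    have h2 : |φu x + φv x| * |u x - v x| ≤ (2 * (M x ^ q * M x)) * |u x - v x| :=
      mul_le_mul_of_nonneg_right h1 (abs_nonneg _)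
    have hs : Real.sqrt (M x ^ q) * Real.sqrt (M x ^ q) = M x ^ q :=
      Real.mul_self_sqrt (hMqnn x)
    have h3 : (2 * (M x ^ q * M x)) * |u x - v x| = F2 x * G3 x := by
      show (2 * (M x ^ q * M x)) * |u x - v x|
        = (Real.sqrt (M x ^ q) * |u x - v x|) * ((2 * Real.sqrt (M x ^ q)) * M x)
      linear_combination (-(2:ℝ)) * M x * |u x - v x| * hs
    linarith
  have hT2bound : |T2| ≤ (Real.sqrt (2 ^ (1+q)) * Real.sqrt G) * Real.sqrt (4 * SPb) := by
    have c1 : |T2| ≤ ∫ x, |(φu x + φv x) * (u x - v x)| := abs_int_le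
    have c2 : ∫ x, |(φu x + φv x) * (u x - v x)| ≤ ∫ x, F2 x * G3 x := by
      apply integral_mono hT2int.abs
        ((hF2c.mul hG3c).integrable_of_hasCompactSupport hF2cs.mul_right) hpt2
    have c3 := intCS0 hF2c hG3c hF2cs hG3cs
    have c4 : Real.sqrt (∫ x, F2 x ^ 2) ≤ Real.sqrt (2 ^ (1+q)) * Real.sqrt G := by
      rw [← Real.sqrt_mul (by positivity : (0:ℝ) ≤ 2 ^ (1+q))]
      exact Real.sqrt_le_sqrt hintF2sq
    have c5 : Real.sqrt (∫ x, G3 x ^ 2) ≤ Real.sqrt (4 * SPb) :=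
      Real.sqrt_le_sqrt hintG3sq
    calc |T2| ≤ ∫ x, F2 x * G3 x := c1.trans c2
      _ ≤ Real.sqrt (∫ x, F2 x ^ 2) * Real.sqrt (∫ x, G3 x ^ 2) := c3
      _ ≤ (Real.sqrt (2 ^ (1+q)) * Real.sqrt G) * Real.sqrt (4 * SPb) := by
          apply mul_le_mul c4 c5 (Real.sqrt_nonneg _)
          positivity
  -- combine
  rw [hsplit]
  have habs2 : |1/2 * T1 + 1/2 * T2| ≤ 1/2 * |T1| + 1/2 * |T2| := by
    calc |1/2 * T1 + 1/2 * T2| ≤ |1/2 * T1| + |1/2 * T2| := abs_add_le _ _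
      _ = 1/2 * |T1| + 1/2 * |T2| := by rw [abs_mul, abs_mul, abs_of_nonneg (by norm_num : (0:ℝ) ≤ 1/2)]
  have final : 1/2 * |T1| + 1/2 * |T2|
      ≤ ((Real.sqrt ((q+3) * SPb) + Real.sqrt (2 ^ (1+q)) * Real.sqrt (4 * SPb)) / 2)
        * Real.sqrt G := by
    have hs1 : Real.sqrt G * Real.sqrt ((q+3) * SPb)
        = Real.sqrt ((q+3) * SPb) * Real.sqrt G := by ring
    have := hT1bound
    have := hT2bound
    nlinarith [hT1bound, hT2bound, Real.sqrt_nonneg G, Real.sqrt_nonneg ((q+3)*SPb),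
      Real.sqrt_nonneg (2^(1+q)), Real.sqrt_nonneg (4*SPb)]
  exact habs2.trans final
end lpdiff

section l2b
variable {d : ℕ}
local notation "E" => EuclideanSpace ℝ (Fin d)

lemma setint_eq {O : Set E} {f : E → ℝ} (h : ∀ x ∉ O, f x = 0) :
    ∫ x in O, f x = ∫ x, f x :=
  setIntegral_eq_integral_of_forall_compl_eq_zero h

set_option maxHeartbeats 1000000 in
lemma l2_bound {p : ℝ} (hp : 2 ≤ p) {O : Set E} (hfin : volume O < ⊤) {f : E → ℝ}
    (hf : Continuous f) (hcs : HasCompactSupport f) (hsup : tsupport f ⊆ O) {R : ℝ} (hR : 0 ≤ R)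
    (hLp : ∫ x in O, |f x| ^ p ≤ R ^ p) :
    ∫ x, (f x)^2 ≤ ((volume O).toReal + 1) ^ (1 - 2/p) * (R^2 + 1) := by
  have h0 : (0:ℝ) < p := by linarith
  have htr : ∫ x, (f x)^2 = ∫ x in O, (f x)^2 := by
    rw [setint_eq (fun x hx => by rw [off_zero hsup hx]; norm_num)]
  have hcast2 : ((2:ℝ)) = ((2:ℕ):ℝ) := by norm_num
  rcases eq_or_lt_of_le hp with hp2 | hpgt
  · -- p = 2
    have hpt : ∀ y : ℝ, |y| ^ p = y ^ 2 := fun y => by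
      rw [← hp2, hcast2, Real.rpow_natCast, sq_abs]
    have key : ∫ x in O, (f x)^2 ≤ R ^ p := by
      simp only [hpt] at hLp
      exact hLp
    have hRp : R ^ p = R ^ 2 := by rw [← hp2, hcast2, Real.rpow_natCast]
    have hexp : 1 - 2/p = 0 := by rw [← hp2]; norm_num
    rw [htr, hexp, Real.rpow_zero]
    linarith [key, hRp]
  · -- p > 2
    have hconj : Real.HolderConjugate (p/2) (p/(p-2)) := by
      refine Real.holderConjugate_iff.mpr ⟨?_, ?_⟩
      · linarith
      · rw [inv_div, inv_div, ← add_div,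
          show (2:ℝ) + (p-2) = p by ring, div_self (ne_of_gt h0)]
    haveI : IsFiniteMeasure ((volume : Measure E).restrict O) :=
      ⟨by rw [Measure.restrict_apply_univ]; exact hfin⟩
    have h2c : Continuous (fun x => (f x)^2) := hf.pow 2
    have h2cs : HasCompactSupport (fun x => (f x)^2) :=
      hcs.comp_left (g := fun t : ℝ => t^2) (by norm_num)
    have hmem1 : MemLp (fun x => (f x)^2) (ENNReal.ofReal (p/2))
        ((volume : Measure E).restrict O) :=
      (h2c.memLp_of_hasCompactSupport h2cs).restrict O
    have hmem2 : MemLp (fun _ : E => (1:ℝ)) (ENNReal.ofReal (p/(p-2)))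
        ((volume : Measure E).restrict O) := memLp_const 1
    have holder := integral_mul_le_Lp_mul_Lq_of_nonneg hconj
      (Filter.Eventually.of_forall fun x => sq_nonneg (f x))
      (Filter.Eventually.of_forall fun _ => zero_le_one)
      hmem1 hmem2
    simp only [mul_one, Real.one_rpow] at holder
    have e2 : ∀ x : E, ((f x)^2) ^ (p/2) = |f x| ^ p := by
      intro x
      rw [← sq_abs, ← Real.rpow_natCast |f x| 2, ← Real.rpow_mul (abs_nonneg (f x)),
        show ((2:ℕ):ℝ) * (p/2) = p by push_cast; ring]
    simp only [e2] at holder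
    have econst : ∫ (_ : E) in O, (1:ℝ) = (volume O).toReal := by
      simp [integral_const, Measure.restrict_apply_univ, measureReal_def]
    rw [econst] at holder
    have e4 : 1/(p/2) = 2/p := one_div_div _ _
    have e5 : 1/(p/(p-2)) = (p-2)/p := one_div_div _ _
    rw [e4, e5] at holder
    have hint_nn : (0:ℝ) ≤ ∫ x in O, |f x| ^ p :=
      integral_nonneg fun x => Real.rpow_nonneg (abs_nonneg _) _
    have b1 : (∫ x in O, |f x| ^ p) ^ (2/p) ≤ (R ^ p) ^ (2/p) :=
      Real.rpow_le_rpow hint_nn hLp (by positivity)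
    have b1' : (R ^ p) ^ (2/p) = R ^ 2 := by
      rw [← Real.rpow_mul hR]
      rw [show p * (2/p) = 2 by field_simp]
      rw [hcast2, Real.rpow_natCast]
    have hOnn : (0:ℝ) ≤ (volume O).toReal := ENNReal.toReal_nonneg
    have b2 : ((volume O).toReal) ^ ((p-2)/p) ≤ ((volume O).toReal + 1) ^ ((p-2)/p) :=
      Real.rpow_le_rpow hOnn (by linarith) (div_nonneg (by linarith) (by linarith))
    have e6 : (p-2)/p = 1 - 2/p := by field_simp
    rw [htr]
    calc ∫ x in O, (f x)^2
        ≤ (∫ x in O, |f x| ^ p) ^ (2/p) * ((volume O).toReal) ^ ((p-2)/p) := holder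
      _ ≤ (R^2) * ((volume O).toReal + 1) ^ ((p-2)/p) := by
          apply mul_le_mul (by rw [← b1']; exact b1) b2 (Real.rpow_nonneg hOnn _)
          nlinarith
      _ ≤ ((volume O).toReal + 1) ^ (1 - 2/p) * (R^2 + 1) := by
          rw [← e6]
          nlinarith [Real.rpow_nonneg (by linarith : (0:ℝ) ≤ (volume O).toReal + 1) ((p-2)/p)]
end l2b

section main
variable {d : ℕ}
local notation "E" => EuclideanSpace ℝ (Fin d)

lemma pow_extract {X R r : ℝ} (hX : 0 ≤ X) (hr : 0 < r) (h : X ^ (1/r) ≤ R) : X ≤ R ^ r := by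
  have h2 : (X ^ (1/r)) ^ r ≤ R ^ r :=
    Real.rpow_le_rpow (Real.rpow_nonneg hX _) h hr.le
  rwa [← Real.rpow_mul hX, show (1/r)*r = 1 by field_simp, Real.rpow_one] at h2

end main

set_option maxHeartbeats 2000000 in
/-- On a bounded open set `O ⊆ ℝ^d` (`d ≥ 1`), for `p ≥ 2`: for every
`R > 0` there exists `C > 0` (depending only on `p`, `|O|`, `R`) such that for all
smooth compactly supported (in `O`) `u, v` with `‖u‖_{L^p(O)}, ‖∇u‖_{L²(O)},
‖v‖_{L^p(O)}, ‖∇v‖_{L²(O)} ≤ R`, one has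
`∫_O (𝒢(u) − 𝒢(v))(u − v) ≤ C ‖u − v‖_{L²(O)}²`, i.e. `𝒢` is fully locally monotone. -/
theorem Gop_locally_monotone (d : ℕ) (hd : 1 ≤ d)
    (O : Set (EuclideanSpace ℝ (Fin d))) (hO : IsOpen O) (hObdd : Bornology.IsBounded O)
    (p : ℝ) (hp : 2 ≤ p) :
    ∀ R > (0 : ℝ), ∃ C > (0 : ℝ), ∀ u v : EuclideanSpace ℝ (Fin d) → ℝ,
      ContDiff ℝ (⊤ : ℕ∞) u → HasCompactSupport u → tsupport u ⊆ O →
      ContDiff ℝ (⊤ : ℕ∞) v → HasCompactSupport v → tsupport v ⊆ O →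
      (∫ x in O, |u x| ^ p) ^ (1 / p) ≤ R →
      (∫ x in O, ‖gradient u x‖ ^ 2) ^ ((1 : ℝ) / 2) ≤ R →
      (∫ x in O, |v x| ^ p) ^ (1 / p) ≤ R →
      (∫ x in O, ‖gradient v x‖ ^ 2) ^ ((1 : ℝ) / 2) ≤ R →
      ∫ x in O, (Gop O p u x - Gop O p v x) * (u x - v x) ≤
        C * ∫ x in O, (u x - v x) ^ 2 := by
  intro R hR
  have hp0 : (0:ℝ) < p := by linarith
  have hq : (0:ℝ) ≤ p - 2 := by linarith
  have hfin : volume O < ⊤ := hObdd.measure_lt_top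
  set κ : ℝ := ((volume O).toReal + 1) ^ (1 - 2/p) * (R^2 + 1) with hκdef
  have hκ0 : (0:ℝ) ≤ κ := by
    apply mul_nonneg (Real.rpow_nonneg (by positivity) _) (by positivity)
  set SPb : ℝ := 2^p * (R^p + R^p) with hSPdef
  have hSPb0 : (0:ℝ) ≤ SPb := by positivity
  set C1 : ℝ := (Real.sqrt ((p+1)*SPb) + Real.sqrt (2^(p-1)) * Real.sqrt (4*SPb))/2 with hC1def
  have hC10 : (0:ℝ) ≤ C1 := by positivity
  refine ⟨(R^2 + R^p) + R^2*κ + C1^2*κ/4 + 1, by positivity, ?_⟩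
  set C : ℝ := (R^2 + R^p) + R^2*κ + C1^2*κ/4 + 1 with hCdef
  intro u v hu hcsu hsuppu hv hcsv hsuppv hupR hugR hvpR hvgR
  have hcu : Continuous u := hu.continuous
  have hcv : Continuous v := hv.continuous
  -- extract power bounds
  have hupO_nn : (0:ℝ) ≤ ∫ x in O, |u x| ^ p :=
    integral_nonneg fun x => Real.rpow_nonneg (abs_nonneg _) _
  have hvpO_nn : (0:ℝ) ≤ ∫ x in O, |v x| ^ p :=
    integral_nonneg fun x => Real.rpow_nonneg (abs_nonneg _) _
  have hugO_nn : (0:ℝ) ≤ ∫ x in O, ‖gradient u x‖ ^ 2 := integral_nonneg fun x => sq_nonneg _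
  have hvgO_nn : (0:ℝ) ≤ ∫ x in O, ‖gradient v x‖ ^ 2 := integral_nonneg fun x => sq_nonneg _
  have hup' : ∫ x in O, |u x| ^ p ≤ R ^ p := pow_extract hupO_nn hp0 hupR
  have hvp' : ∫ x in O, |v x| ^ p ≤ R ^ p := pow_extract hvpO_nn hp0 hvpR
  have hcast2 : ((2:ℝ)) = ((2:ℕ):ℝ) := by norm_num
  have hRtwo : R ^ (2:ℝ) = R ^ 2 := by rw [hcast2, Real.rpow_natCast]
  have hug' : ∫ x in O, ‖gradient u x‖ ^ 2 ≤ R ^ 2 := by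
    rw [← hRtwo]; exact pow_extract hugO_nn (by norm_num) hugR
  have hvg' : ∫ x in O, ‖gradient v x‖ ^ 2 ≤ R ^ 2 := by
    rw [← hRtwo]; exact pow_extract hvgO_nn (by norm_num) hvgR
  -- w and its properties
  set w : (EuclideanSpace ℝ (Fin d)) → ℝ := u - v with hwdef
  have hwx : ∀ x, w x = u x - v x := fun x => rfl
  have hwcd : ContDiff ℝ (⊤ : ℕ∞) w := hu.sub hv
  have hcw : Continuous w := hwcd.continuous
  have hcsw : HasCompactSupport w := by
    have := hcs_sub (f := u) (g := v) hcsu hcsv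
    exact this
  -- transfers of the gradient integrals
  have hgu_tr : ∫ x in O, ‖gradient u x‖ ^ 2 = ∫ x, ‖gradient u x‖ ^ 2 :=
    setint_eq (fun x hx => by rw [off_grad_zero hsuppu hx]; simp)
  have hgv_tr : ∫ x in O, ‖gradient v x‖ ^ 2 = ∫ x, ‖gradient v x‖ ^ 2 :=
    setint_eq (fun x hx => by rw [off_grad_zero hsuppv hx]; simp)
  have hpu_tr : ∫ x in O, |u x| ^ p = ∫ x, |u x| ^ p :=
    setint_eq (fun x hx => by rw [off_zero hsuppu hx, abs_zero, Real.zero_rpow (ne_of_gt hp0)])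
  have hpv_tr : ∫ x in O, |v x| ^ p = ∫ x, |v x| ^ p :=
    setint_eq (fun x hx => by rw [off_zero hsuppv hx, abs_zero, Real.zero_rpow (ne_of_gt hp0)])
  -- key quantities
  set A : ℝ := ∫ x, ‖gradient w x‖ ^ 2 with hAdef
  set G : ℝ := ∫ x, (|u x| ^ (p-2) * u x - |v x| ^ (p-2) * v x) * (u x - v x) with hGdef
  set T : ℝ := ∫ x, (u x - v x) ^ 2 with hTdef
  set Su : ℝ := ∫ x, u x * (u x - v x) with hSudef
  set Sv : ℝ := ∫ x, v x * (u x - v x) with hSvdef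
  set cu : ℝ := (∫ y in O, ‖gradient u y‖ ^ 2) + ∫ y in O, |u y| ^ p with hcudef
  set cv : ℝ := (∫ y in O, ‖gradient v y‖ ^ 2) + ∫ y in O, |v y| ^ p with hcvdef
  have hA0 : 0 ≤ A := integral_nonneg fun x => sq_nonneg _
  have hG0 : 0 ≤ G := integral_nonneg fun x => sp_nonneg hq (u x) (v x)
  have hT0 : 0 ≤ T := integral_nonneg fun x => sq_nonneg _
  -- continuity/support of auxiliary functions
  have hφuc : Continuous (fun x => |u x| ^ (p-2) * u x) :=
    ((Real.continuous_rpow_const hq).comp hcu.abs).mul hcu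
  have hφvc : Continuous (fun x => |v x| ^ (p-2) * v x) :=
    ((Real.continuous_rpow_const hq).comp hcv.abs).mul hcv
  have hφucs : HasCompactSupport (fun x => |u x| ^ (p-2) * u x) :=
    hcsu.comp_left (g := fun t : ℝ => |t| ^ (p-2) * t) (by simp)
  have hφvcs : HasCompactSupport (fun x => |v x| ^ (p-2) * v x) :=
    hcsv.comp_left (g := fun t : ℝ => |t| ^ (p-2) * t) (by simp)
  have hwc' : Continuous (fun x => u x - v x) := hcu.sub hcv
  have hwcs' : HasCompactSupport (fun x => u x - v x) := hcs_sub hcsu hcsv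
  -- L² bounds
  have hl2u : ∫ x, (u x)^2 ≤ κ := l2_bound hp hfin hcu hcsu hsuppu hR.le hup'
  have hl2v : ∫ x, (v x)^2 ≤ κ := l2_bound hp hfin hcv hcsv hsuppv hR.le hvp'
  -- |Su| ≤ √κ √T , |Sv| ≤ √κ √T
  have hSu_le : |Su| ≤ Real.sqrt κ * Real.sqrt T := by
    have h1 := intCS_abs hcu hwc' hcsu hwcs'
    have h2 : Real.sqrt (∫ x, (u x)^2) ≤ Real.sqrt κ := Real.sqrt_le_sqrt hl2u
    calc |Su| ≤ Real.sqrt (∫ x, (u x)^2) * Real.sqrt (∫ x, (u x - v x)^2) := h1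
      _ ≤ Real.sqrt κ * Real.sqrt T := by
          rw [hTdef]
          exact mul_le_mul_of_nonneg_right h2 (Real.sqrt_nonneg _)
  have hSv_le : |Sv| ≤ Real.sqrt κ * Real.sqrt T := by
    have h1 := intCS_abs hcv hwc' hcsv hwcs'
    have h2 : Real.sqrt (∫ x, (v x)^2) ≤ Real.sqrt κ := Real.sqrt_le_sqrt hl2v
    calc |Sv| ≤ Real.sqrt (∫ x, (v x)^2) * Real.sqrt (∫ x, (u x - v x)^2) := h1
      _ ≤ Real.sqrt κ * Real.sqrt T := by
          rw [hTdef]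
          exact mul_le_mul_of_nonneg_right h2 (Real.sqrt_nonneg _)
  -- gradient difference bound
  have hnwc : Continuous (fun x => ‖gradient w x‖) := (grad_cont hwcd).norm
  have hnuc : Continuous (fun x => ‖gradient u x‖) := (grad_cont hu).norm
  have hnvc : Continuous (fun x => ‖gradient v x‖) := (grad_cont hv).norm
  have hnwcs : HasCompactSupport (fun x => ‖gradient w x‖) :=
    (grad_cs hcsw).comp_left (g := fun y : EuclideanSpace ℝ (Fin d) => ‖y‖) norm_zero
  have hnucs : HasCompactSupport (fun x => ‖gradient u x‖) :=
    (grad_cs hcsu).comp_left (g := fun y : EuclideanSpace ℝ (Fin d) => ‖y‖) norm_zero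
  have hnvcs : HasCompactSupport (fun x => ‖gradient v x‖) :=
    (grad_cs hcsv).comp_left (g := fun y : EuclideanSpace ℝ (Fin d) => ‖y‖) norm_zero
  have hgradw : ∀ x, gradient w x = gradient u x - gradient v x :=
    grad_sub (hu.differentiable (by simp)) (hv.differentiable (by simp))
  have hsqrtA_u : Real.sqrt (∫ x, ‖gradient u x‖ ^ 2) ≤ R := by
    rw [← hgu_tr]
    calc Real.sqrt (∫ x in O, ‖gradient u x‖ ^ 2) ≤ Real.sqrt (R^2) := Real.sqrt_le_sqrt hug'
      _ = R := Real.sqrt_sq hR.le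
  have hsqrtA_v : Real.sqrt (∫ x, ‖gradient v x‖ ^ 2) ≤ R := by
    rw [← hgv_tr]
    calc Real.sqrt (∫ x in O, ‖gradient v x‖ ^ 2) ≤ Real.sqrt (R^2) := Real.sqrt_le_sqrt hvg'
      _ = R := Real.sqrt_sq hR.le
  have hinner_int : ∀ (f : EuclideanSpace ℝ (Fin d) → ℝ)
      (hf : ContDiff ℝ (⊤ : ℕ∞) f) (hcsf : HasCompactSupport f),
      Integrable (fun x => (inner ℝ (gradient w x) (gradient f x) : ℝ)) (volume : Measure (EuclideanSpace ℝ (Fin d))) := by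
    intro f hf hcsf
    apply Continuous.integrable_of_hasCompactSupport
    · exact (grad_cont hwcd).inner (grad_cont hf)
    · apply (grad_cs hcsw).mono'
      apply subset_trans _ (subset_tsupport _)
      intro x hx
      simp only [Function.mem_support] at hx ⊢
      intro h0
      apply hx
      rw [h0, inner_zero_left]
  have hinner_bnd : ∀ (f : EuclideanSpace ℝ (Fin d) → ℝ)
      (hf : ContDiff ℝ (⊤ : ℕ∞) f) (hcsf : HasCompactSupport f),
      |∫ x, (inner ℝ (gradient w x) (gradient f x) : ℝ)|
        ≤ Real.sqrt A * Real.sqrt (∫ x, ‖gradient f x‖ ^ 2) := by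
    intro f hf hcsf
    have c1 : |∫ x, (inner ℝ (gradient w x) (gradient f x) : ℝ)|
        ≤ ∫ x, |(inner ℝ (gradient w x) (gradient f x) : ℝ)| := abs_int_le
    have c2 : ∫ x, |(inner ℝ (gradient w x) (gradient f x) : ℝ)|
        ≤ ∫ x, ‖gradient w x‖ * ‖gradient f x‖ := by
      apply integral_mono (hinner_int f hf hcsf).abs
        ((hnwc.mul ((grad_cont hf).norm)).integrable_of_hasCompactSupport hnwcs.mul_right)
      intro x
      exact abs_real_inner_le_norm _ _
    have c3 := intCS0 hnwc ((grad_cont hf).norm) hnwcs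
      ((grad_cs hcsf).comp_left (g := fun y : EuclideanSpace ℝ (Fin d) => ‖y‖) norm_zero)
    exact (c1.trans c2).trans c3
  have hgradsq_int : ∀ (f : EuclideanSpace ℝ (Fin d) → ℝ)
      (hf : ContDiff ℝ (⊤ : ℕ∞) f) (hcsf : HasCompactSupport f),
      Integrable (fun x => ‖gradient f x‖ ^ 2) (volume : Measure (EuclideanSpace ℝ (Fin d))) := by
    intro f hf hcsf
    apply Continuous.integrable_of_hasCompactSupport ((grad_cont hf).norm.pow 2)
    exact ((grad_cs hcsf).comp_left (g := fun y : EuclideanSpace ℝ (Fin d) => ‖y‖^2) (by simp) :)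
  have hgdiff : |(∫ y in O, ‖gradient u y‖ ^ 2) - ∫ y in O, ‖gradient v y‖ ^ 2|
      ≤ 2 * R * Real.sqrt A := by
    rw [hgu_tr, hgv_tr]
    have heq : (∫ x, ‖gradient u x‖ ^ 2) - ∫ x, ‖gradient v x‖ ^ 2
        = (∫ x, (inner ℝ (gradient w x) (gradient u x) : ℝ))
          + ∫ x, (inner ℝ (gradient w x) (gradient v x) : ℝ) := by
      calc (∫ x, ‖gradient u x‖ ^ 2) - ∫ x, ‖gradient v x‖ ^ 2
          = ∫ x, (‖gradient u x‖ ^ 2 - ‖gradient v x‖ ^ 2) :=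
            (integral_sub (hgradsq_int u hu hcsu) (hgradsq_int v hv hcsv)).symm
        _ = ∫ x, ((inner ℝ (gradient w x) (gradient u x) : ℝ)
              + (inner ℝ (gradient w x) (gradient v x) : ℝ)) := by
            apply integral_congr_ae
            apply Filter.Eventually.of_forall
            intro x
            show ‖gradient u x‖ ^ 2 - ‖gradient v x‖ ^ 2
              = (inner ℝ (gradient w x) (gradient u x) : ℝ)
                + (inner ℝ (gradient w x) (gradient v x) : ℝ)
            rw [hgradw x, inner_sub_left, inner_sub_left,
              real_inner_self_eq_norm_sq, real_inner_self_eq_norm_sq,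
              real_inner_comm (gradient v x) (gradient u x)]
            ring
        _ = (∫ x, (inner ℝ (gradient w x) (gradient u x) : ℝ))
            + ∫ x, (inner ℝ (gradient w x) (gradient v x) : ℝ) :=
            integral_add (hinner_int u hu hcsu) (hinner_int v hv hcsv)
    rw [heq]
    have b1 := hinner_bnd u hu hcsu
    have b2 := hinner_bnd v hv hcsv
    have b1' : |∫ x, (inner ℝ (gradient w x) (gradient u x) : ℝ)| ≤ Real.sqrt A * R :=
      b1.trans (mul_le_mul_of_nonneg_left hsqrtA_u (Real.sqrt_nonneg _))
    have b2' : |∫ x, (inner ℝ (gradient w x) (gradient v x) : ℝ)| ≤ Real.sqrt A * R :=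
      b2.trans (mul_le_mul_of_nonneg_left hsqrtA_v (Real.sqrt_nonneg _))
    calc |(∫ x, (inner ℝ (gradient w x) (gradient u x) : ℝ))
          + ∫ x, (inner ℝ (gradient w x) (gradient v x) : ℝ)|
        ≤ |∫ x, (inner ℝ (gradient w x) (gradient u x) : ℝ)|
          + |∫ x, (inner ℝ (gradient w x) (gradient v x) : ℝ)| := abs_add_le _ _
      _ ≤ Real.sqrt A * R + Real.sqrt A * R := add_le_add b1' b2'
      _ = 2 * R * Real.sqrt A := by ring
  -- Lp difference bound
  have hMc : Continuous (fun x => (|u x| + |v x|) ^ p) :=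
    (Real.continuous_rpow_const hp0.le).comp (hcu.abs.add hcv.abs)
  have hMcs : HasCompactSupport (fun x => (|u x| + |v x|) ^ p) := by
    apply HasCompactSupport.comp_left (g := fun t : ℝ => t ^ p) _ (Real.zero_rpow (ne_of_gt hp0))
    exact (hcsu.comp_left (g := fun t : ℝ => |t|) abs_zero).add
      (hcsv.comp_left (g := fun t : ℝ => |t|) abs_zero)
  have hpabs_int : ∀ (f : EuclideanSpace ℝ (Fin d) → ℝ)
      (hf : Continuous f) (hcsf : HasCompactSupport f),
      Integrable (fun x => |f x| ^ p) (volume : Measure (EuclideanSpace ℝ (Fin d))) := by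
    intro f hf hcsf
    apply Continuous.integrable_of_hasCompactSupport
      ((Real.continuous_rpow_const hp0.le).comp hf.abs)
    exact hcsf.comp_left (g := fun t : ℝ => |t| ^ p)
      (by simp [Real.zero_rpow (ne_of_gt hp0)])
  have hSP : ∫ x, (|u x| + |v x|) ^ p ≤ SPb := by
    have step : ∫ x, (|u x| + |v x|) ^ p ≤ ∫ x, 2^p * (|u x| ^ p + |v x| ^ p) := by
      apply integral_mono (hMc.integrable_of_hasCompactSupport hMcs)
        (((hpabs_int u hcu hcsu).add (hpabs_int v hcv hcsv)).const_mul _)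
      intro x
      exact rpow_add_le_two_rpow (abs_nonneg _) (abs_nonneg _) hp0.le
    rw [integral_const_mul, integral_add (hpabs_int u hcu hcsu) (hpabs_int v hcv hcsv)] at step
    rw [hSPdef]
    rw [← hpu_tr, ← hpv_tr] at step
    have h2p : (0:ℝ) < 2^p := Real.rpow_pos_of_pos (by norm_num) _
    nlinarith only [hup', hvp', step, h2p]
  have hpdiff : |(∫ y in O, |u y| ^ p) - ∫ y in O, |v y| ^ p| ≤ C1 * Real.sqrt G := by
    rw [hpu_tr, hpv_tr]
    have := lp_diff_bound hp hcu hcv hcsu hcsv hSP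
    rw [hC1def, hGdef]
    exact this
  -- bounds on cu, cv
  have hcu_le : cu ≤ R^2 + R^p := add_le_add hug' hup'
  have hcv_le : cv ≤ R^2 + R^p := add_le_add hvg' hvp'
  have hcucv : |cu - cv| ≤ 2*R*Real.sqrt A + C1 * Real.sqrt G := by
    have : cu - cv = ((∫ y in O, ‖gradient u y‖ ^ 2) - ∫ y in O, ‖gradient v y‖ ^ 2)
        + ((∫ y in O, |u y| ^ p) - ∫ y in O, |v y| ^ p) := by
      rw [hcudef, hcvdef]; ring
    rw [this]
    calc |((∫ y in O, ‖gradient u y‖ ^ 2) - ∫ y in O, ‖gradient v y‖ ^ 2)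
          + ((∫ y in O, |u y| ^ p) - ∫ y in O, |v y| ^ p)|
        ≤ |(∫ y in O, ‖gradient u y‖ ^ 2) - ∫ y in O, ‖gradient v y‖ ^ 2|
          + |(∫ y in O, |u y| ^ p) - ∫ y in O, |v y| ^ p| := abs_add_le _ _
      _ ≤ 2*R*Real.sqrt A + C1 * Real.sqrt G := add_le_add hgdiff hpdiff
  -- main integral decomposition
  have hlapw_c : Continuous (lap w) := lap_cont hwcd
  have hlapw_cs : HasCompactSupport (lap w) := lap_cs hcsw
  have hI1 : Integrable (fun x => lap w x * (u x - v x)) (volume : Measure (EuclideanSpace ℝ (Fin d))) :=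
    (hlapw_c.mul hwc').integrable_of_hasCompactSupport hlapw_cs.mul_right
  have hI2 : Integrable (fun x => (|u x| ^ (p-2) * u x - |v x| ^ (p-2) * v x) * (u x - v x))
      (volume : Measure (EuclideanSpace ℝ (Fin d))) :=
    ((hφuc.sub hφvc).mul hwc').integrable_of_hasCompactSupport (hcs_sub hφucs hφvcs).mul_right
  have hI3 : Integrable (fun x => (cu * u x - cv * v x) * (u x - v x))
      (volume : Measure (EuclideanSpace ℝ (Fin d))) :=
    (((continuous_const.mul hcu).sub (continuous_const.mul hcv)).mul hwc').integrable_of_hasCompactSupport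
      (hcs_sub (hcsu.comp_left (g := fun t : ℝ => cu * t) (mul_zero cu))
        (hcsv.comp_left (g := fun t : ℝ => cv * t) (mul_zero cv))).mul_right
  have htrans : ∫ x in O, (Gop O p u x - Gop O p v x) * (u x - v x)
      = ∫ x, (Gop O p u x - Gop O p v x) * (u x - v x) := by
    apply setint_eq
    intro x hx
    rw [off_zero hsuppu hx, off_zero hsuppv hx]
    ring
  have hsplit : ∫ x, (Gop O p u x - Gop O p v x) * (u x - v x)
      = (∫ x, lap w x * (u x - v x))
        - (∫ x, (|u x| ^ (p-2) * u x - |v x| ^ (p-2) * v x) * (u x - v x))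
        + ∫ x, (cu * u x - cv * v x) * (u x - v x) := by
    have e12 : Integrable (fun x => lap w x * (u x - v x)
        - (|u x| ^ (p-2) * u x - |v x| ^ (p-2) * v x) * (u x - v x))
        (volume : Measure (EuclideanSpace ℝ (Fin d))) := hI1.sub hI2
    calc ∫ x, (Gop O p u x - Gop O p v x) * (u x - v x)
        = ∫ x, (lap w x * (u x - v x)
            - (|u x| ^ (p-2) * u x - |v x| ^ (p-2) * v x) * (u x - v x)
            + (cu * u x - cv * v x) * (u x - v x)) := by
          apply integral_congr_ae
          apply Filter.Eventually.of_forall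
          intro x
          show (Gop O p u x - Gop O p v x) * (u x - v x)
            = lap w x * (u x - v x)
              - (|u x| ^ (p-2) * u x - |v x| ^ (p-2) * v x) * (u x - v x)
              + (cu * u x - cv * v x) * (u x - v x)
          have hlw : lap w x = lap u x - lap v x := lap_sub hu hv x
          unfold Gop
          rw [hlw, ← hcudef, ← hcvdef]
          ring
      _ = (∫ x, (lap w x * (u x - v x)
            - (|u x| ^ (p-2) * u x - |v x| ^ (p-2) * v x) * (u x - v x)))
          + ∫ x, (cu * u x - cv * v x) * (u x - v x) := integral_add e12 hI3
      _ = (∫ x, lap w x * (u x - v x))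
          - (∫ x, (|u x| ^ (p-2) * u x - |v x| ^ (p-2) * v x) * (u x - v x))
          + ∫ x, (cu * u x - cv * v x) * (u x - v x) := by
          rw [integral_sub hI1 hI2]
  -- IBP
  have hibp : ∫ x, lap w x * (u x - v x) = - A := by
    rw [hAdef]
    have := lap_ibp hwcd hcsw
    exact this
  -- third term
  have hIuw : Integrable (fun x => u x * (u x - v x)) (volume : Measure (EuclideanSpace ℝ (Fin d))) :=
    (hcu.mul hwc').integrable_of_hasCompactSupport hcsu.mul_right
  have hIvw : Integrable (fun x => v x * (u x - v x)) (volume : Measure (EuclideanSpace ℝ (Fin d))) :=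
    (hcv.mul hwc').integrable_of_hasCompactSupport hcsv.mul_right
  have hIT : Integrable (fun x => (u x - v x)^2) (volume : Measure (EuclideanSpace ℝ (Fin d))) :=
    (hwc'.pow 2).integrable_of_hasCompactSupport
      (hwcs'.comp_left (g := fun t : ℝ => t^2) (by norm_num) :)
  have hthird : ∫ x, (cu * u x - cv * v x) * (u x - v x)
      = (cu+cv)/2 * T + (cu-cv)/2 * (Su + Sv) := by
    calc ∫ x, (cu * u x - cv * v x) * (u x - v x)
        = ∫ x, ((cu+cv)/2 * (u x - v x)^2
            + (cu-cv)/2 * (u x * (u x - v x) + v x * (u x - v x))) := by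
          apply integral_congr_ae
          apply Filter.Eventually.of_forall
          intro x
          show (cu * u x - cv * v x) * (u x - v x)
            = (cu+cv)/2 * (u x - v x)^2 + (cu-cv)/2 * (u x * (u x - v x) + v x * (u x - v x))
          ring
      _ = (∫ x, (cu+cv)/2 * (u x - v x)^2)
          + ∫ x, (cu-cv)/2 * (u x * (u x - v x) + v x * (u x - v x)) :=
          integral_add (hIT.const_mul _) ((hIuw.add hIvw).const_mul _)
      _ = (cu+cv)/2 * T + (cu-cv)/2 * (Su + Sv) := by
          rw [integral_const_mul, integral_const_mul, integral_add hIuw hIvw,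
            ← hTdef, ← hSudef, ← hSvdef]
  -- final assembly
  rw [htrans, hsplit, hibp, hthird]
  have htr_T : ∫ x in O, (u x - v x)^2 = T := by
    rw [hTdef]
    apply setint_eq
    intro x hx
    rw [off_zero hsuppu hx, off_zero hsuppv hx]
    ring
  rw [htr_T, ← hGdef]
  set sa := Real.sqrt A with hsa
  set sg := Real.sqrt G with hsg
  set st := Real.sqrt T with hst
  set sk := Real.sqrt κ with hsk
  have hsa2 : sa^2 = A := Real.sq_sqrt hA0
  have hsg2 : sg^2 = G := Real.sq_sqrt hG0
  have hst2 : st^2 = T := Real.sq_sqrt hT0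
  have hsk2 : sk^2 = κ := Real.sq_sqrt hκ0
  have hsa0 : 0 ≤ sa := Real.sqrt_nonneg _
  have hsg0 : 0 ≤ sg := Real.sqrt_nonneg _
  have hst0 : 0 ≤ st := Real.sqrt_nonneg _
  have hsk0 : 0 ≤ sk := Real.sqrt_nonneg _
  -- bound the cross term
  have hcross : (cu-cv)/2 * (Su + Sv) ≤ (R*sa + C1/2*sg) * (2*(sk*st)) := by
    have h1 : (cu-cv)/2 * (Su + Sv) ≤ |(cu-cv)/2 * (Su + Sv)| := le_abs_self _
    have h2 : |(cu-cv)/2 * (Su + Sv)| = |cu-cv|/2 * |Su + Sv| := by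
      rw [abs_mul, abs_div]
      norm_num
    have h3 : |Su + Sv| ≤ 2*(sk*st) := by
      calc |Su + Sv| ≤ |Su| + |Sv| := abs_add_le _ _
        _ ≤ 2*(sk*st) := by rw [hsk, hst]; linarith [hSu_le, hSv_le]
    have h4 : |cu-cv|/2 ≤ R*sa + C1/2*sg := by
      have := hcucv
      rw [hsa, hsg] at *
      linarith
    calc (cu-cv)/2 * (Su + Sv) ≤ |cu-cv|/2 * |Su + Sv| := by rw [← h2]; exact h1
      _ ≤ (R*sa + C1/2*sg) * (2*(sk*st)) := by
          apply mul_le_mul h4 h3 (abs_nonneg _)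
          positivity
  have hhalf : (cu+cv)/2 * T ≤ (R^2 + R^p) * T := by
    apply mul_le_mul_of_nonneg_right _ hT0
    linarith
  -- conclude
  have hfin2 : -A - G + ((cu+cv)/2 * T + (cu-cv)/2 * (Su + Sv)) ≤ C * T := by
    set y : ℝ := sk * st with hy
    have h3 : y^2 = κ * T := by rw [hy, mul_pow, hsk2, hst2]
    have h1 : 2*R*(sa*y) ≤ sa^2 + R^2*y^2 := by nlinarith only [sq_nonneg (sa - R*y)]
    have h2' : C1*(sg*y) ≤ sg^2 + C1^2/4*y^2 := by nlinarith only [sq_nonneg (sg - C1/2*y)]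
    have h4 : R^2*y^2 = R^2*(κ*T) := by rw [h3]
    have h5 : C1^2/4*y^2 = C1^2/4*(κ*T) := by rw [h3]
    have hcross' : (cu-cv)/2*(Su + Sv) ≤ 2*R*(sa*y) + C1*(sg*y) := by
      have e : (R*sa + C1/2*sg)*(2*(sk*st)) = 2*R*(sa*y) + C1*(sg*y) := by rw [hy]; ring
      linarith only [hcross, e]
    have hCT : C*T = (R^2+R^p)*T + R^2*(κ*T) + C1^2/4*(κ*T) + T := by rw [hCdef]; ring
    have eA : A = sa^2 := hsa2.symm
    have eG : G = sg^2 := hsg2.symm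
    linarith only [hhalf, hcross', h1, h2', h4, h5, hT0, hCT, eA, eG]
  linarith only [hfin2]
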